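/- In the setting of an extension of cocommutative coalgebras C̃ = C⊕X with convolution-associative m : C → Hom(A⊗A,A): if m̃ : C̃ → Hom(A⊗A,A) is an associative deformation (m̃∘ι = m, convolution-associative), then for any ν ∈ Hom(X, Hom(A⊗A,A)), the map m̃_ν defined by m̃_ν(c,x) = m̃(c,x) + ν(x) is convolution-associative if and only if d_X^2(ν) = 0. -/

import Mathlib

open TensorProduct

noncomputable section

namespace DefCx2

variable {k : Type*} [Field k]
variable {A : Type*} [AddCommGroup A] [Module k A]
variable {C : Type*} [AddCommGroup C] [Module k C] [Coalgebra k C]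
variable {X : Type*} [AddCommGroup X] [Module k X]

/-- Convolution-associativity of `μ : D → Hom(A⊗A, A)` with respect to an (explicitly
given) comultiplication `Δ` on `D`:
`Σ μ(d₍₁₎)∘(μ(d₍₂₎)⊗A) = Σ μ(d₍₁₎)∘(A⊗μ(d₍₂₎))` as maps `(A⊗A)⊗A → A`. -/
def ConvAssocWith {D : Type*} [AddCommGroup D] [Module k D]
    (Δ : D →ₗ[k] D ⊗[k] D) (μ : D →ₗ[k] (A ⊗[k] A →ₗ[k] A)) : Prop :=
  TensorProduct.lift (LinearMap.mk₂ k
      (fun d d' => (μ d) ∘ₗ LinearMap.rTensor A (μ d'))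
      (by intro x y c; simp [map_add, LinearMap.add_comp])
      (by intro r x c; simp [map_smul, LinearMap.smul_comp])
      (by intro x c c'; simp [map_add, LinearMap.rTensor_add, LinearMap.comp_add])
      (by intro r x c; simp [map_smul, LinearMap.rTensor_smul, LinearMap.comp_smul])) ∘ₗ Δ
  =
  TensorProduct.lift (LinearMap.mk₂ k
      (fun d d' => (μ d) ∘ₗ LinearMap.lTensor A (μ d') ∘ₗ
        (TensorProduct.assoc k A A A).toLinearMap)
      (by intro x y c; simp [map_add, LinearMap.add_comp])
      (by intro r x c; simp [map_smul, LinearMap.smul_comp])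
      (by intro x c c'
          simp [map_add, LinearMap.lTensor_add, LinearMap.comp_add, LinearMap.add_comp])
      (by intro r x c
          simp [map_smul, LinearMap.lTensor_smul, LinearMap.comp_smul,
            LinearMap.smul_comp])) ∘ₗ Δ

/-- The degree-2 differential
`d²(ν)(x) = Σ m(x₍1₎)∘(A⊗ν(x₍0₎)) − Σ ν(x₍0₎)∘(m(x₍1₎)⊗A) + Σ ν(x₍0₎)∘(A⊗m(x₍1₎))
 − Σ m(x₍1₎)∘(ν(x₍0₎)⊗A)` as maps `(A⊗A)⊗A → A`. -/
def d2 (ρ : X →ₗ[k] X ⊗[k] C) (m : C →ₗ[k] (A ⊗[k] A →ₗ[k] A))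
    (ν : X →ₗ[k] (A ⊗[k] A →ₗ[k] A)) :
    X →ₗ[k] ((A ⊗[k] A) ⊗[k] A →ₗ[k] A) :=
  TensorProduct.lift (LinearMap.mk₂ k
    (fun x c =>
      (m c) ∘ₗ LinearMap.lTensor A (ν x) ∘ₗ (TensorProduct.assoc k A A A).toLinearMap
      - (ν x) ∘ₗ LinearMap.rTensor A (m c)
      + (ν x) ∘ₗ LinearMap.lTensor A (m c) ∘ₗ (TensorProduct.assoc k A A A).toLinearMap
      - (m c) ∘ₗ LinearMap.rTensor A (ν x))
    (by intro x y c
        simp [map_add, LinearMap.lTensor_add, LinearMap.rTensor_add, LinearMap.add_comp,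
          LinearMap.comp_add]
        abel)
    (by intro r x c
        simp [map_smul, LinearMap.lTensor_smul, LinearMap.rTensor_smul,
          LinearMap.smul_comp, LinearMap.comp_smul, smul_sub, smul_add])
    (by intro x c c'
        simp [map_add, LinearMap.lTensor_add, LinearMap.rTensor_add, LinearMap.add_comp,
          LinearMap.comp_add]
        abel)
    (by intro r x c
        simp [map_smul, LinearMap.lTensor_smul, LinearMap.rTensor_smul,
          LinearMap.smul_comp, LinearMap.comp_smul, smul_sub, smul_add])) ∘ₗ ρ

/-- The identification `((A⊗A)⊗A)⊗A ≃ A⊗((A⊗A)⊗A)`. -/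
def eA4first : (((A ⊗[k] A) ⊗[k] A) ⊗[k] A) ≃ₗ[k] A ⊗[k] ((A ⊗[k] A) ⊗[k] A) :=
  ((TensorProduct.assoc k (A ⊗[k] A) A A).trans
    (TensorProduct.assoc k A A (A ⊗[k] A))).trans
      (TensorProduct.congr (LinearEquiv.refl k A) (TensorProduct.assoc k A A A).symm)

/-- The degree-3 differential `d³ = Σ_{i=0}^{4} (−1)^i d_i³` of the complex `C_X^*(A,m)`,
as maps `((A⊗A)⊗A)⊗A → A`. -/
def d3 (ρ : X →ₗ[k] X ⊗[k] C) (m : C →ₗ[k] (A ⊗[k] A →ₗ[k] A))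
    (ν : X →ₗ[k] ((A ⊗[k] A) ⊗[k] A →ₗ[k] A)) :
    X →ₗ[k] (((A ⊗[k] A) ⊗[k] A) ⊗[k] A →ₗ[k] A) :=
  TensorProduct.lift (LinearMap.mk₂ k
    (fun x c =>
      (m c) ∘ₗ LinearMap.lTensor A (ν x) ∘ₗ (eA4first (k := k) (A := A)).toLinearMap
      - (ν x) ∘ₗ LinearMap.rTensor A (LinearMap.rTensor A (m c))
      + (ν x) ∘ₗ LinearMap.rTensor A (LinearMap.lTensor A (m c)) ∘ₗ
          (TensorProduct.congr (TensorProduct.assoc k A A A)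
            (LinearEquiv.refl k A)).toLinearMap
      - (ν x) ∘ₗ LinearMap.lTensor (A ⊗[k] A) (m c) ∘ₗ
          (TensorProduct.assoc k (A ⊗[k] A) A A).toLinearMap
      + (m c) ∘ₗ LinearMap.rTensor A (ν x))
    (by intro x y c
        simp [map_add, LinearMap.lTensor_add, LinearMap.rTensor_add, LinearMap.add_comp,
          LinearMap.comp_add]
        abel)
    (by intro r x c
        simp [map_smul, LinearMap.lTensor_smul, LinearMap.rTensor_smul,
          LinearMap.smul_comp, LinearMap.comp_smul, smul_sub, smul_add])
    (by intro x c c'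
        simp [map_add, LinearMap.lTensor_add, LinearMap.rTensor_add, LinearMap.add_comp,
          LinearMap.comp_add]
        abel)
    (by intro r x c
        simp [map_smul, LinearMap.lTensor_smul, LinearMap.rTensor_smul,
          LinearMap.smul_comp, LinearMap.comp_smul, smul_sub, smul_add])) ∘ₗ ρ

/-- The obstruction
`ζ(x) = Σ m(ω₁(x))∘(A⊗m(ω₂(x))) − Σ m(ω₁(x))∘(m(ω₂(x))⊗A)` as maps `(A⊗A)⊗A → A`. -/
def zeta (ω : X →ₗ[k] C ⊗[k] C) (m : C →ₗ[k] (A ⊗[k] A →ₗ[k] A)) :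
    X →ₗ[k] ((A ⊗[k] A) ⊗[k] A →ₗ[k] A) :=
  TensorProduct.lift (LinearMap.mk₂ k
    (fun c c' =>
      (m c) ∘ₗ LinearMap.lTensor A (m c') ∘ₗ (TensorProduct.assoc k A A A).toLinearMap
      - (m c) ∘ₗ LinearMap.rTensor A (m c'))
    (by intro x y c; simp [map_add, LinearMap.add_comp]; abel)
    (by intro r x c; simp [map_smul, LinearMap.smul_comp, smul_sub])
    (by intro x c c'
        simp [map_add, LinearMap.lTensor_add, LinearMap.rTensor_add, LinearMap.comp_add,
          LinearMap.add_comp]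
        abel)
    (by intro r x c
        simp [map_smul, LinearMap.lTensor_smul, LinearMap.rTensor_smul,
          LinearMap.comp_smul, LinearMap.smul_comp, smul_sub])) ∘ₗ ω

/-- The comultiplication on `C̃ = C ⊕ X` built from the comultiplication of `C`, a
symmetric coaction `ρ` on `X` and a symmetric 2-cocycle `ω : X → C ⊗ C`. -/
def extComul (ρ : X →ₗ[k] X ⊗[k] C) (ω : X →ₗ[k] C ⊗[k] C) :
    (C × X) →ₗ[k] (C × X) ⊗[k] (C × X) :=
  TensorProduct.map (LinearMap.inl k C X) (LinearMap.inl k C X) ∘ₗ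
      (Coalgebra.comul : C →ₗ[k] C ⊗[k] C) ∘ₗ LinearMap.fst k C X
    + TensorProduct.map (LinearMap.inl k C X) (LinearMap.inr k C X) ∘ₗ
      ((TensorProduct.comm k X C).toLinearMap ∘ₗ ρ) ∘ₗ LinearMap.snd k C X
    + TensorProduct.map (LinearMap.inr k C X) (LinearMap.inl k C X) ∘ₗ
      ρ ∘ₗ LinearMap.snd k C X
    + TensorProduct.map (LinearMap.inl k C X) (LinearMap.inl k C X) ∘ₗ
      ω ∘ₗ LinearMap.snd k C X

end DefCx2

end

/-!
The associativity defect of `μ : C ⊕ X → Hom(A ⊗ A, A)` is `convDefect μ μ ∘ Δ̃` with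
`convDefect` bilinear. Since `Δ̃` has no `X ⊗ X` component, this defect depends only on `μ ∘ inl`
and, linearly, on `μ ∘ inr`. Perturbing `m̃` by `ν` supported on `X` keeps `m̃ ∘ inl = m` and
shifts `m̃ ∘ inr` by `ν`, which changes the defect by exactly `-d²(ν)` on `X`. As the defect of
`m̃` vanishes, the defect of `m̃_ν` is `-d²(ν) ∘ snd`.
-/

namespace DefCx2

open LinearMap

section AssocDefect

variable {k : Type*} [Field k] {A : Type*} [AddCommGroup A] [Module k A]

def assocDefect :
    (A ⊗[k] A →ₗ[k] A) →ₗ[k] (A ⊗[k] A →ₗ[k] A) →ₗ[k] ((A ⊗[k] A) ⊗[k] A →ₗ[k] A) :=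
  mk₂ k
    (fun f g => f ∘ₗ rTensor A g - f ∘ₗ lTensor A g ∘ₗ (TensorProduct.assoc k A A A).toLinearMap)
    (by intro f f' g; simp only [add_comp]; abel)
    (by intro r f g; simp only [smul_comp, smul_sub])
    (by intro f g g'; simp only [rTensor_add, lTensor_add, comp_add, add_comp]; abel)
    (by intro r f g; simp only [rTensor_smul, lTensor_smul, comp_smul, smul_comp, smul_sub])

variable {D E : Type*} [AddCommGroup D] [Module k D] [AddCommGroup E] [Module k E]

def convDefect (f : D →ₗ[k] (A ⊗[k] A →ₗ[k] A)) (g : E →ₗ[k] (A ⊗[k] A →ₗ[k] A)) :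
    D ⊗[k] E →ₗ[k] ((A ⊗[k] A) ⊗[k] A →ₗ[k] A) :=
  lift (assocDefect.compl₁₂ f g)

theorem convAssocWith_iff_convDefect_comp_eq_zero (Δ : D →ₗ[k] D ⊗[k] D)
    (μ : D →ₗ[k] (A ⊗[k] A →ₗ[k] A)) :
    ConvAssocWith Δ μ ↔ convDefect μ μ ∘ₗ Δ = 0 := by
  rw [ConvAssocWith, ← sub_eq_zero, ← sub_comp]
  refine Iff.of_eq (congrArg (fun F => F ∘ₗ Δ = 0) ?_)
  exact TensorProduct.ext' fun _ _ => rfl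

theorem convDefect_add_left (f f' : D →ₗ[k] (A ⊗[k] A →ₗ[k] A))
    (g : E →ₗ[k] (A ⊗[k] A →ₗ[k] A)) :
    convDefect (f + f') g = convDefect f g + convDefect f' g :=
  TensorProduct.ext' fun _ _ => by simp [convDefect]

theorem convDefect_add_right (f : D →ₗ[k] (A ⊗[k] A →ₗ[k] A))
    (g g' : E →ₗ[k] (A ⊗[k] A →ₗ[k] A)) :
    convDefect f (g + g') = convDefect f g + convDefect f g' :=
  TensorProduct.ext' fun _ _ => by simp [convDefect]

theorem convDefect_comp_map {D' E' : Type*} [AddCommGroup D'] [Module k D'] [AddCommGroup E']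
    [Module k E'] (f : D →ₗ[k] (A ⊗[k] A →ₗ[k] A)) (g : E →ₗ[k] (A ⊗[k] A →ₗ[k] A))
    (i : D' →ₗ[k] D) (j : E' →ₗ[k] E) :
    convDefect f g ∘ₗ TensorProduct.map i j = convDefect (f ∘ₗ i) (g ∘ₗ j) :=
  lift_comp_map _ _ _

end AssocDefect

section Extension

variable {k : Type*} [Field k] {A C X : Type*} [AddCommGroup A] [Module k A]
  [AddCommGroup C] [Module k C] [AddCommGroup X] [Module k X]
  (ρ : X →ₗ[k] X ⊗[k] C) (ω : X →ₗ[k] C ⊗[k] C)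

theorem d2_eq_neg_convDefect (m : C →ₗ[k] (A ⊗[k] A →ₗ[k] A))
    (ν : X →ₗ[k] (A ⊗[k] A →ₗ[k] A)) :
    d2 ρ m ν = -((convDefect m ν ∘ₗ (TensorProduct.comm k X C).toLinearMap
      + convDefect ν m) ∘ₗ ρ) := by
  rw [d2, ← neg_comp]
  congr 1
  refine TensorProduct.ext' fun x c => ?_
  simp only [convDefect, assocDefect, lift.tmul, mk₂_apply, compl₁₂_apply, neg_add_rev,
    LinearMap.add_apply, LinearMap.neg_apply, neg_sub, coe_comp, LinearEquiv.coe_coe,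
    Function.comp_apply, comm_tmul]
  abel

variable [Coalgebra k C]

theorem convDefect_comp_extComul (μ : C × X →ₗ[k] (A ⊗[k] A →ₗ[k] A)) :
    convDefect μ μ ∘ₗ extComul ρ ω =
      convDefect (μ ∘ₗ inl k C X) (μ ∘ₗ inl k C X) ∘ₗ
          (Coalgebra.comul ∘ₗ fst k C X + ω ∘ₗ snd k C X)
        + (convDefect (μ ∘ₗ inl k C X) (μ ∘ₗ inr k C X) ∘ₗ
            (TensorProduct.comm k X C).toLinearMap
          + convDefect (μ ∘ₗ inr k C X) (μ ∘ₗ inl k C X)) ∘ₗ ρ ∘ₗ snd k C X := by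
  simp only [extComul, comp_add, add_comp, ← comp_assoc, convDefect_comp_map]
  abel

theorem convDefect_comp_extComul_add_comp_snd (μ : C × X →ₗ[k] (A ⊗[k] A →ₗ[k] A))
    (ν : X →ₗ[k] (A ⊗[k] A →ₗ[k] A)) :
    convDefect (μ + ν ∘ₗ snd k C X) (μ + ν ∘ₗ snd k C X) ∘ₗ extComul ρ ω =
      convDefect μ μ ∘ₗ extComul ρ ω - d2 ρ (μ ∘ₗ inl k C X) ν ∘ₗ snd k C X := by
  have hinl : (μ + ν ∘ₗ snd k C X) ∘ₗ inl k C X = μ ∘ₗ inl k C X := by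
    rw [add_comp, comp_assoc, snd_comp_inl, comp_zero, add_zero]
  have hinr : (μ + ν ∘ₗ snd k C X) ∘ₗ inr k C X = μ ∘ₗ inr k C X + ν := by
    rw [add_comp, comp_assoc, snd_comp_inr, comp_id]
  rw [convDefect_comp_extComul, convDefect_comp_extComul, hinl, hinr, convDefect_add_left,
    convDefect_add_right, d2_eq_neg_convDefect]
  simp only [add_comp, neg_comp, comp_assoc]
  abel

end Extension

end DefCx2

open DefCx2 in
theorem perturbation_assoc_iff_cocycle_general {k : Type*} [Field k] {A C X : Type*}
    [AddCommGroup A] [Module k A]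
    [AddCommGroup C] [Module k C] [Coalgebra k C]
    [AddCommGroup X] [Module k X]
    (ρ : X →ₗ[k] X ⊗[k] C)
    (ω : X →ₗ[k] C ⊗[k] C)
    (m : C →ₗ[k] (A ⊗[k] A →ₗ[k] A))
    (mt : (C × X) →ₗ[k] (A ⊗[k] A →ₗ[k] A))
    (hrestrict : mt ∘ₗ LinearMap.inl k C X = m)
    (hassoc : ConvAssocWith (extComul ρ ω) mt) :
    ∀ ν : X →ₗ[k] (A ⊗[k] A →ₗ[k] A),
      ConvAssocWith (extComul ρ ω) (mt + ν ∘ₗ LinearMap.snd k C X) ↔ d2 ρ m ν = 0 := by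
  intro ν
  rw [convAssocWith_iff_convDefect_comp_eq_zero] at hassoc ⊢
  rw [convDefect_comp_extComul_add_comp_snd, hassoc, hrestrict, zero_sub, neg_eq_zero,
    ← LinearMap.zero_comp (LinearMap.snd k C X), LinearMap.cancel_right LinearMap.snd_surjective]

open DefCx2 in
/-- In the setting of an extension of cocommutative coalgebras
`C̃ = C ⊕ X` with convolution-associative `m`: if `m̃` is an associative deformation of
`m` (i.e. `m̃ ∘ ι = m` and `m̃` is convolution-associative), then for any
`ν ∈ Hom(X, Hom(A⊗A,A))`, the perturbed map `m̃_ν(c,x) = m̃(c,x) + ν(x)` is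
convolution-associative if and only if `d_X^2(ν) = 0`. -/
theorem perturbation_assoc_iff_cocycle {k : Type*} [Field k] {A C X : Type*}
    [AddCommGroup A] [Module k A]
    [AddCommGroup C] [Module k C] [Coalgebra k C]
    [AddCommGroup X] [Module k X]
    (hcocomm : (TensorProduct.comm k C C).toLinearMap ∘ₗ
      (Coalgebra.comul : C →ₗ[k] C ⊗[k] C) = Coalgebra.comul)
    (ρ : X →ₗ[k] X ⊗[k] C)
    (hcoassoc : (TensorProduct.assoc k X C C).toLinearMap ∘ₗ LinearMap.rTensor C ρ ∘ₗ ρ =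
      LinearMap.lTensor X (Coalgebra.comul : C →ₗ[k] C ⊗[k] C) ∘ₗ ρ)
    (hcounit : (TensorProduct.rid k X).toLinearMap ∘ₗ
      LinearMap.lTensor X (Coalgebra.counit : C →ₗ[k] k) ∘ₗ ρ = LinearMap.id)
    (ω : X →ₗ[k] C ⊗[k] C)
    (hsymm : (TensorProduct.comm k C C).toLinearMap ∘ₗ ω = ω)
    (hnorm₁ : (TensorProduct.lid k C).toLinearMap ∘ₗ
      LinearMap.rTensor C (Coalgebra.counit : C →ₗ[k] k) ∘ₗ ω = 0)
    (hnorm₂ : (TensorProduct.rid k C).toLinearMap ∘ₗ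
      LinearMap.lTensor C (Coalgebra.counit : C →ₗ[k] k) ∘ₗ ω = 0)
    (hcocycle : LinearMap.lTensor C ω ∘ₗ ((TensorProduct.comm k X C).toLinearMap ∘ₗ ρ)
      - (TensorProduct.assoc k C C C).toLinearMap ∘ₗ
          LinearMap.rTensor C (Coalgebra.comul : C →ₗ[k] C ⊗[k] C) ∘ₗ ω
      + LinearMap.lTensor C (Coalgebra.comul : C →ₗ[k] C ⊗[k] C) ∘ₗ ω
      - (TensorProduct.assoc k C C C).toLinearMap ∘ₗ LinearMap.rTensor C ω ∘ₗ ρ = 0)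
    (m : C →ₗ[k] (A ⊗[k] A →ₗ[k] A))
    (hm : ConvAssocWith (Coalgebra.comul : C →ₗ[k] C ⊗[k] C) m)
    (mt : (C × X) →ₗ[k] (A ⊗[k] A →ₗ[k] A))
    (hrestrict : mt ∘ₗ LinearMap.inl k C X = m)
    (hassoc : ConvAssocWith (extComul ρ ω) mt) :
    ∀ ν : X →ₗ[k] (A ⊗[k] A →ₗ[k] A),
      ConvAssocWith (extComul ρ ω) (mt + ν ∘ₗ LinearMap.snd k C X) ↔ d2 ρ m ν = 0 :=
  perturbation_assoc_iff_cocycle_general ρ ω m mt hrestrict hassoc
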